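/- arXiv:2312.03256 — 3 statements merged into one kernel-verified Lean document; each statement's English description precedes it below -/
import Mathlib

section
/- Under Zipfian scores with parameter $z > 1$ ($n \to \infty$), with $w$ buckets of $c$ slots each and $k' = \eta w$ for $\eta > 0$: conditioned on none of the top-$k'$ features colliding with a given hot feature of score at least $\gamma\|a\|_1$, the probability that the colliding score exceeds $(c-1)\gamma\|a\|_1$ is at most $\frac{(k')^{1-z}}{(c-1)\gamma w} = \frac{\eta}{(c-1)\gamma(\eta w)^z}\cdot\eta^{0}$; combining with the collision probability bound, the hot feature is held in the sketch with probability at least $\sup_{\eta > 0} 3^{-\eta}\left(1 - \frac{\eta}{(c-1)\gamma(\eta w)^z}\right)$. -/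
open MeasureTheory ProbabilityTheory

/-- Main HotSketch theorem under a Zipfian distribution. `Fhat` is the
colliding score entering the hot feature's bucket, `C η` is the event that none of the
top-`k' = ηw` features collides with it (happening with probability at least `3^{-η}`),
and the conditional expectation of `Fhat` given `C η` is at most `‖a‖₁ (ηw)^{1-z} / w`.
Then the conditional probability that the colliding score exceeds `(c-1)γ‖a‖₁` is at
most `(ηw)^{1-z} / ((c-1)γw)`, and the hot feature (of score at least `γ‖a‖₁`) is held
with probability at least `sup_{η>0} 3^{-η} (1 - η / ((c-1)γ(ηw)^z))`. -/
theorem stmt6 {Ω : Type*} [MeasurableSpace Ω] (μ : Measure Ω) [IsProbabilityMeasure μ]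
    (w c : ℕ) (hw : 1 ≤ w) (hc : 2 ≤ c)
    (z γ a1 : ℝ) (hz : 1 < z) (hγ : 0 < γ) (hγ1 : γ < 1) (ha1 : 0 < a1)
    (Fhat : Ω → ℝ) (hFmeas : Measurable Fhat) (hFnn : ∀ ω, 0 ≤ Fhat ω)
    (hFint : Integrable Fhat μ)
    (C : ℝ → Set Ω) (hCmeas : ∀ η, MeasurableSet (C η))
    (hCprob : ∀ η, 0 < η → (3 : ℝ) ^ (-η) ≤ (μ (C η)).toReal)
    (hcondE : ∀ η, 0 < η →
      ∫ ω in C η, Fhat ω ∂μ ≤ (μ (C η)).toReal * (a1 * (η * w) ^ (1 - z) / w))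
    (held : Set Ω) (hheld : MeasurableSet held)
    (hretain : {ω | Fhat ω ≤ ((c : ℝ) - 1) * γ * a1} ⊆ held) :
    (∀ η, 0 < η →
      ((ProbabilityTheory.cond μ (C η)) {ω | ((c : ℝ) - 1) * γ * a1 < Fhat ω}).toReal
        ≤ (η * w) ^ (1 - z) / (((c : ℝ) - 1) * γ * w)) ∧
    sSup {x : ℝ | ∃ η : ℝ, 0 < η ∧
        x = (3 : ℝ) ^ (-η) * (1 - η / (((c : ℝ) - 1) * γ * (η * w) ^ z))}
      ≤ (μ held).toReal := by
  have hcR : (1:ℝ) ≤ (c:ℝ) - 1 := by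
    have : (2:ℝ) ≤ (c:ℝ) := by exact_mod_cast hc
    linarith
  have hwR : (1:ℝ) ≤ (w:ℝ) := by exact_mod_cast hw
  have hwpos : (0:ℝ) < w := by linarith
  set t : ℝ := ((c:ℝ) - 1) * γ * a1 with ht
  have htpos : 0 < t := by
    have : (0:ℝ) < (c:ℝ) - 1 := by linarith
    positivity
  set A : Set Ω := {ω | t < Fhat ω} with hA
  have hAmeas : MeasurableSet A := measurableSet_lt measurable_const hFmeas
  have key : ∀ η, 0 < η → ((ProbabilityTheory.cond μ (C η)) A).toReal
      ≤ (η * w) ^ (1 - z) / (((c:ℝ) - 1) * γ * w) := by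
    intro η hη
    have h3pos : (0:ℝ) < (3:ℝ) ^ (-η) := Real.rpow_pos_of_pos (by norm_num) _
    have hCpos : 0 < (μ (C η)).toReal := lt_of_lt_of_le h3pos (hCprob η hη)
    have hCne : μ (C η) ≠ 0 := by
      intro h
      rw [h] at hCpos; simp at hCpos
    have hCfin : μ (C η) ≠ ⊤ := measure_ne_top μ _
    have hpow_pos : (0:ℝ) < (η * w) ^ (1 - z) :=
      Real.rpow_pos_of_pos (by positivity) _
    -- Markov on the restricted measure
    have hmarkov := mul_meas_ge_le_integral_of_nonneg (μ := μ.restrict (C η))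
      (ae_of_all _ hFnn) (hFint.restrict) t
    have hmono : (μ.restrict (C η)) A ≤ (μ.restrict (C η)) {x | t ≤ Fhat x} :=
      measure_mono (fun x hx => le_of_lt (show t < Fhat x from hx))
    have hfin1 : (μ.restrict (C η)) A ≠ ⊤ := by
      exact ne_top_of_le_ne_top (measure_ne_top μ _) (Measure.restrict_le_self _)
    have hfin2 : (μ.restrict (C η)) {x | t ≤ Fhat x} ≠ ⊤ := by
      exact ne_top_of_le_ne_top (measure_ne_top μ _) (Measure.restrict_le_self _)
    have hmonoR : ((μ.restrict (C η)) A).toReal ≤ ((μ.restrict (C η)) {x | t ≤ Fhat x}).toReal :=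
      ENNReal.toReal_le_toReal hfin1 hfin2 |>.mpr hmono
    have hchain : t * ((μ.restrict (C η)) A).toReal
        ≤ (μ (C η)).toReal * (a1 * (η * w) ^ (1 - z) / w) := by
      calc t * ((μ.restrict (C η)) A).toReal
          ≤ t * ((μ.restrict (C η)) {x | t ≤ Fhat x}).toReal := by
            exact mul_le_mul_of_nonneg_left hmonoR htpos.le
        _ ≤ ∫ ω in C η, Fhat ω ∂μ := hmarkov
        _ ≤ (μ (C η)).toReal * (a1 * (η * w) ^ (1 - z) / w) := hcondE η hη
    have hcond : ((ProbabilityTheory.cond μ (C η)) A).toReal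
        = ((μ.restrict (C η)) A).toReal / (μ (C η)).toReal := by
      rw [ProbabilityTheory.cond_apply (hCmeas η) μ A,
        Measure.restrict_apply' (hCmeas η), Set.inter_comm,
        ENNReal.toReal_mul, ENNReal.toReal_inv]
      ring
    rw [hcond, div_le_iff₀ hCpos]
    have hrearr : t * ((μ.restrict (C η)) A).toReal
        ≤ (μ (C η)).toReal * (a1 * (η * w) ^ (1 - z) / w) := hchain
    rw [ht] at hrearr
    have hden : (0:ℝ) < ((c:ℝ) - 1) * γ * w := by
      have : (0:ℝ) < (c:ℝ) - 1 := by linarith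
      positivity
    rw [div_mul_eq_mul_div, le_div_iff₀ hden]
    have hw0 : (w:ℝ) ≠ 0 := ne_of_gt hwpos
    have h2 : ((c:ℝ)-1) * γ * a1 * ((μ.restrict (C η)) A).toReal * w
        ≤ (μ (C η)).toReal * a1 * (η * w) ^ (1 - z) := by
      have h2' := mul_le_mul_of_nonneg_right hrearr hwpos.le
      have he : (μ (C η)).toReal * (a1 * (η * w) ^ (1 - z) / w) * w
          = (μ (C η)).toReal * a1 * (η * w) ^ (1 - z) := by field_simp
      linarith [he ▸ h2']
    have h3 : a1 * (((μ.restrict (C η)) A).toReal * (((c:ℝ)-1) * γ * w))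
        ≤ a1 * ((η * w) ^ (1 - z) * (μ (C η)).toReal) := by linarith [h2]
    exact le_of_mul_le_mul_left h3 ha1
  refine ⟨key, ?_⟩
  apply Real.sSup_le
  · rintro x ⟨η, hη, rfl⟩
    have h3pos : (0:ℝ) < (3:ℝ) ^ (-η) := Real.rpow_pos_of_pos (by norm_num) _
    have hCpos : 0 < (μ (C η)).toReal := lt_of_lt_of_le h3pos (hCprob η hη)
    have hηw : (0:ℝ) < η * w := by positivity
    have hzpow : (0:ℝ) < (η * w) ^ z := Real.rpow_pos_of_pos hηw _
    have hden : (0:ℝ) < ((c:ℝ) - 1) * γ * w := by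
      have h0 : (0:ℝ) < (c:ℝ) - 1 := by linarith
      positivity
    set b : ℝ := (η * w) ^ (1 - z) / (((c:ℝ) - 1) * γ * w) with hb
    have hbeq : η / (((c:ℝ) - 1) * γ * (η * w) ^ z) = b := by
      rw [hb]
      have h1 : (η * w) ^ (1 - z) = (η * w) ^ (1:ℝ) / (η * w) ^ z := by
        rw [← Real.rpow_sub hηw]
      rw [h1, Real.rpow_one]
      have hc1 : ((c:ℝ) - 1) ≠ 0 := by linarith
      field_simp
    rcases le_or_gt (1 - η / (((c:ℝ) - 1) * γ * (η * w) ^ z)) 0 with hneg | hpos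
    · have : (3:ℝ) ^ (-η) * (1 - η / (((c:ℝ) - 1) * γ * (η * w) ^ z)) ≤ 0 :=
        mul_nonpos_of_nonneg_of_nonpos h3pos.le hneg
      exact this.trans ENNReal.toReal_nonneg
    · rw [hbeq] at hpos ⊢
      -- need: 3^{-η} * (1 - b) ≤ μ held
      have hp := key η hη
      set p : ℝ := ((ProbabilityTheory.cond μ (C η)) A).toReal with hpdef
      have hpnn : 0 ≤ p := ENNReal.toReal_nonneg
      -- μ(C∩A).toReal = p * μC
      have hCfin : μ (C η) ≠ ⊤ := measure_ne_top μ _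
      have hpeq : (μ (C η ∩ A)).toReal = p * (μ (C η)).toReal := by
        rw [hpdef, ProbabilityTheory.cond_apply (hCmeas η) μ A,
          ENNReal.toReal_mul, ENNReal.toReal_inv]
        field_simp
      have hsplit : (μ (C η ∩ A)).toReal + (μ (C η \ A)).toReal = (μ (C η)).toReal := by
        rw [← ENNReal.toReal_add (measure_ne_top μ _) (measure_ne_top μ _)]
        congr 1
        exact measure_inter_add_diff (C η) hAmeas
      have hsub : C η \ A ⊆ held := by
        intro ω hω
        apply hretain
        have : ¬ t < Fhat ω := hω.2
        simpa [ht] using not_lt.mp this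
      have hheldge : (μ (C η \ A)).toReal ≤ (μ held).toReal :=
        ENNReal.toReal_le_toReal (measure_ne_top μ _) (measure_ne_top μ _) |>.mpr
          (measure_mono hsub)
      have hC1 : (μ (C η)).toReal ≤ 1 := by
        have := prob_le_one (μ := μ) (s := C η)
        exact ENNReal.toReal_le_toReal (measure_ne_top μ _) (by simp) |>.mpr this |>.trans
          (by simp)
      have h3le : (3:ℝ) ^ (-η) ≤ (μ (C η)).toReal := hCprob η hη
      -- μ held ≥ μ(C\A) = μC - p μC = μC (1-p) ≥ 3^{-η}(1-b)
      nlinarith [hp, hpnn, h3pos, hpos, hCpos, hpeq, hsplit, hheldge, h3le]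
  · exact ENNReal.toReal_nonneg
end

section
/- Consider SGD iterates $\theta_{t+1} = \theta_t - \alpha \widetilde g_{i_t}$ on $f(\theta) = \frac{1}{N}\sum_i f_i(\theta)$, where each $f_i$ is $L$-smooth, gradients have bounded second moment ($\mathbb{E}\|\nabla f_i(\theta)\|^2 \le \sigma_0^2$, $\mathbb{E}\|\nabla f(\theta)\|^2 \le \sigma_0^2$), bounded variance ($\mathbb{E}\|\nabla f_i(\theta) - \nabla f(\theta)\|^2 \le \sigma^2$), and $f \geq f^*$. Let $\epsilon_t = \|\widetilde g_{i_t} - g_{i_t}\|$ with $g_{i_t} = \nabla f_{i_t}(\theta_t)$, and let $\alpha < 1/L$. Then for $\bar\theta_T$ sampled uniformly from $\{\theta_0, \ldots, \theta_{T-1}\}$: $\mathbb{E}\|\nabla f(\bar\theta_T)\|^2 \le \frac{f(\theta_0) - f^*}{T\alpha(1 - \alpha L)} + \frac{\alpha(2L\sigma^2 + \sigma_0^2)}{2(1 - \alpha L)} + \frac{(1 + \alpha^2 L)\sum_{t=0}^{T-1}\mathbb{E}[\epsilon_t^2]}{2T\alpha(1-\alpha L)}$. -/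
open MeasureTheory ProbabilityTheory

open scoped RealInnerProductSpace

section grad
variable {E : Type*} [NormedAddCommGroup E] [InnerProductSpace ℝ E] [CompleteSpace E]

lemma inner_gradient_eq (f : E → ℝ) (x v : E) :
    ⟪gradient f x, v⟫ = fderiv ℝ f x v :=
  InnerProductSpace.toDual_symm_apply

/-- Descent lemma. -/
lemma descent_lemma (f : E → ℝ) (hf : Differentiable ℝ f) (L : ℝ) (hL : 0 ≤ L)
    (hlip : ∀ x y, ‖gradient f x - gradient f y‖ ≤ L * ‖x - y‖) (x d : E) :
    f (x + d) ≤ f x + ⟪gradient f x, d⟫ + L / 2 * ‖d‖ ^ 2 := by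
  set φ : ℝ → ℝ := fun t => f (x + t • d) - t * ⟪gradient f x, d⟫ - t ^ 2 * (L / 2 * ‖d‖ ^ 2)
    with hφ
  have hder : ∀ t : ℝ, HasDerivAt φ
      (⟪gradient f (x + t • d), d⟫ - ⟪gradient f x, d⟫ - 2 * t * (L / 2 * ‖d‖ ^ 2)) t := by
    intro t
    have hline : HasDerivAt (fun t : ℝ => x + t • d) d t := by
      simpa using ((hasDerivAt_id t).smul_const d).const_add x
    have h1 : HasDerivAt (fun t : ℝ => f (x + t • d)) (fderiv ℝ f (x + t • d) d) t := by
      have := (hf (x + t • d)).hasFDerivAt.comp_hasDerivAt t hline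
      exact this
    rw [← inner_gradient_eq] at h1
    have h2 : HasDerivAt (fun t : ℝ => t * ⟪gradient f x, d⟫) ⟪gradient f x, d⟫ t := by
      simpa using (hasDerivAt_id t).mul_const (⟪gradient f x, d⟫)
    have h3 : HasDerivAt (fun t : ℝ => t ^ 2 * (L / 2 * ‖d‖ ^ 2))
        (2 * t * (L / 2 * ‖d‖ ^ 2)) t := by
      simpa [pow_one] using (hasDerivAt_pow 2 t).mul_const (L / 2 * ‖d‖ ^ 2)
    exact (h1.sub h2).sub h3
  have hanti : AntitoneOn φ (Set.Icc 0 1) := by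
    apply antitoneOn_of_deriv_nonpos (convex_Icc 0 1)
    · exact Continuous.continuousOn (by
        exact ((hf.continuous.comp (by continuity)).sub (by continuity)).sub (by continuity))
    · intro t ht
      exact (hder t).differentiableAt.differentiableWithinAt
    · intro t ht
      rw [interior_Icc] at ht
      rw [(hder t).deriv]
      have key : ⟪gradient f (x + t • d) - gradient f x, d⟫ ≤ t * (L * ‖d‖ ^ 2) := by
        calc ⟪gradient f (x + t • d) - gradient f x, d⟫
            ≤ ‖gradient f (x + t • d) - gradient f x‖ * ‖d‖ := real_inner_le_norm _ _
          _ ≤ (L * ‖x + t • d - x‖) * ‖d‖ := by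
              apply mul_le_mul_of_nonneg_right (hlip _ _) (norm_nonneg d)
          _ = t * (L * ‖d‖ ^ 2) := by
              rw [add_sub_cancel_left, norm_smul, Real.norm_eq_abs,
                abs_of_nonneg ht.1.le]
              ring
      rw [inner_sub_left] at key
      nlinarith [key]
  have h01 : φ 1 ≤ φ 0 := hanti (by norm_num) (by norm_num) (by norm_num)
  simp only [hφ, one_smul, zero_smul, add_zero, one_pow] at h01
  nlinarith [h01]

end grad

section split
variable {Ω : Type*} [MeasurableSpace Ω] {μ : Measure Ω} [IsProbabilityMeasure μ]
variable {E : Type*} [MeasurableSpace E]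

lemma integrable_of_bounded {f : Ω → ℝ} (hf : AEStronglyMeasurable f μ) (C : ℝ)
    (hb : ∀ ω, |f ω| ≤ C) : Integrable f μ :=
  (integrable_const C).mono' hf (Filter.Eventually.of_forall fun ω => by
    simpa [Real.norm_eq_abs] using hb ω)

lemma indep_split {N : ℕ} (J : Ω → Fin N) (X : Ω → E)
    (hJ : Measurable J) (hX : Measurable X) (hind : IndepFun J X μ)
    (hu : ∀ j, (μ {ω | J ω = j}).toReal = 1 / (N : ℝ))
    (φ : Fin N → E → ℝ) (hφm : ∀ j, Measurable (φ j)) (C : ℝ)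
    (hb : ∀ j x, |φ j x| ≤ C) :
    Integrable (fun ω => φ (J ω) (X ω)) μ ∧
      ∫ ω, φ (J ω) (X ω) ∂μ = (∑ j, ∫ ω, φ j (X ω) ∂μ) / (N : ℝ) := by
  have hrep : ∀ ω, φ (J ω) (X ω)
      = ∑ j : Fin N, (if J ω = j then (1:ℝ) else 0) * φ j (X ω) := by
    intro ω
    rw [Finset.sum_eq_single (J ω)]
    · simp
    · intro b _ hb'; simp [Ne.symm hb']
    · simp
  have hintj : ∀ j, Integrable (fun ω => φ j (X ω)) μ := fun j =>
    integrable_of_bounded (((hφm j).comp hX).aestronglyMeasurable) C (fun ω => hb j _)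
  have hintind : ∀ j : Fin N,
      Integrable (fun ω => (if J ω = j then (1:ℝ) else 0) * φ j (X ω)) μ := by
    intro j
    apply integrable_of_bounded _ (|C| : ℝ)
    · intro ω
      by_cases hj : J ω = j
      · simp only [hj, if_pos, one_mul]
        exact le_trans (hb j (X ω)) (le_abs_self C)
      · simp only [hj, if_neg, not_false_iff, zero_mul, abs_zero]
        exact abs_nonneg C
    · apply AEStronglyMeasurable.mul
      · exact (Measurable.ite (hJ (measurableSet_singleton j)) measurable_const
          measurable_const).aestronglyMeasurable
      · exact ((hφm j).comp hX).aestronglyMeasurable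
  have hindj : ∀ j : Fin N, IndepFun (fun ω => if J ω = j then (1:ℝ) else 0)
      (fun ω => φ j (X ω)) μ := by
    intro j
    have : IndepFun ((fun k : Fin N => if k = j then (1:ℝ) else 0) ∘ J)
        ((φ j) ∘ X) μ := hind.comp Measurable.of_discrete (hφm j)
    exact this
  have hmeasind : ∀ j : Fin N, ∫ ω, (if J ω = j then (1:ℝ) else 0) ∂μ = 1 / (N : ℝ) := by
    intro j
    have hms : MeasurableSet {ω | J ω = j} := hJ (measurableSet_singleton j)
    have : (fun ω => if J ω = j then (1:ℝ) else 0)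
        = Set.indicator {ω | J ω = j} (fun _ => (1:ℝ)) := by
      funext ω; by_cases h : J ω = j <;> simp [h, Set.indicator, Set.mem_setOf_eq]
    rw [this, integral_indicator_const _ hms, measureReal_def, hu j]; simp
  have hind1 : ∀ j : Fin N, Integrable (fun ω => if J ω = j then (1:ℝ) else 0) μ := by
    intro j
    exact integrable_of_bounded ((Measurable.ite (hJ (measurableSet_singleton j))
      measurable_const measurable_const).aestronglyMeasurable) 1
      (fun ω => by by_cases h : J ω = j <;> simp [h])
  constructor
  · have : Integrable (fun ω => ∑ j : Fin N, (if J ω = j then (1:ℝ) else 0) * φ j (X ω)) μ :=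
      integrable_finset_sum _ (fun j _ => hintind j)
    exact this.congr (Filter.Eventually.of_forall fun ω => (hrep ω).symm)
  · calc ∫ ω, φ (J ω) (X ω) ∂μ
        = ∫ ω, ∑ j : Fin N, (if J ω = j then (1:ℝ) else 0) * φ j (X ω) ∂μ := by
          exact integral_congr_ae (Filter.Eventually.of_forall hrep)
      _ = ∑ j : Fin N, ∫ ω, (if J ω = j then (1:ℝ) else 0) * φ j (X ω) ∂μ :=
          integral_finset_sum _ (fun j _ => hintind j)
      _ = ∑ j : Fin N, (1 / (N : ℝ)) * ∫ ω, φ j (X ω) ∂μ := by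
          refine Finset.sum_congr rfl (fun j _ => ?_)
          have := (hindj j).integral_mul_eq_mul_integral (hind1 j).aestronglyMeasurable
            (hintj j).aestronglyMeasurable
          rw [← hmeasind j]
          exact this
      _ = (∑ j, ∫ ω, φ j (X ω) ∂μ) / (N : ℝ) := by
          rw [← Finset.mul_sum]; ring
end split

section grad2
variable {E : Type*} [NormedAddCommGroup E] [InnerProductSpace ℝ E] [CompleteSpace E]

lemma gradient_avg {N : ℕ} (fs : Fin N → E → ℝ) (hdiff : ∀ i, Differentiable ℝ (fs i))
    (x : E) :
    gradient (fun x => (∑ i, fs i x) / (N : ℝ)) x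
      = (N : ℝ)⁻¹ • ∑ i, gradient (fs i) x := by
  have hsum : HasFDerivAt (fun x => ∑ i, fs i x) (∑ i, fderiv ℝ (fs i) x) x :=
    HasFDerivAt.fun_sum (fun i _ => (hdiff i x).hasFDerivAt)
  have hdiv : HasFDerivAt (fun x => (∑ i, fs i x) / (N : ℝ))
      ((N : ℝ)⁻¹ • ∑ i, fderiv ℝ (fs i) x) x := by
    simpa [div_eq_inv_mul, smul_smul, Pi.smul_def] using hsum.const_smul ((N : ℝ)⁻¹)
  rw [gradient, hdiv.fderiv, _root_.map_smul, map_sum]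
  rfl

lemma norm_gradient_eq_norm_fderiv (f : E → ℝ) (x : E) :
    ‖gradient f x‖ = ‖fderiv ℝ f x‖ := by
  rw [gradient]
  exact LinearIsometryEquiv.norm_map _ _

lemma inner_expand3 (d u e : E) :
    ‖d + u + e‖ ^ 2 = ‖d‖ ^ 2 + ‖u‖ ^ 2 + ‖e‖ ^ 2
      + 2 * ⟪d, u⟫ + 2 * ⟪d, e⟫ + 2 * ⟪u, e⟫ := by
  rw [norm_add_sq_real, norm_add_sq_real, inner_add_left]; ring

lemma young_ineq (a b : ℝ) (u d e : E) :
    2 * (a * ⟪u, e⟫ - b * ⟪d, e⟫)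
      ≤ a ^ 2 * ‖u‖ ^ 2 + b ^ 2 * ‖d‖ ^ 2 - 2 * (a * b) * ⟪d, u⟫ + ‖e‖ ^ 2 := by
  have h := sq_nonneg (‖(a • u - b • d) - e‖)
  have hexp : ‖(a • u - b • d) - e‖ ^ 2
      = a ^ 2 * ‖u‖ ^ 2 + b ^ 2 * ‖d‖ ^ 2 - 2 * (a * b) * ⟪d, u⟫ + ‖e‖ ^ 2
        - 2 * (a * ⟪u, e⟫ - b * ⟪d, e⟫) := by
    simp only [norm_sub_sq_real, inner_sub_left, real_inner_smul_left,
      real_inner_smul_right, norm_smul, mul_pow, Real.norm_eq_abs, sq_abs,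
      real_inner_comm u d]
    ring
  nlinarith [h, hexp]
end grad2


set_option maxHeartbeats 1000000

/-- Convergence of SGD with deviated gradients (CAFE convergence theorem).
`fs i` are the component losses, `F = (1/N) ∑ᵢ fs i` the objective, `idx t` the uniformly
sampled index at step `t` (independent of the current iterate), `gt t` the deviated
(compressed) gradient used in the update `θ (t+1) = θ t - α • gt t`, `g t` the true
stochastic gradient, and `eps t = ‖gt t - g t‖` the deviation. -/
theorem stmt10 {D N : ℕ} (hN : 0 < N)
    (fs : Fin N → EuclideanSpace ℝ (Fin D) → ℝ)
    (F : EuclideanSpace ℝ (Fin D) → ℝ)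
    (hF : F = fun x => (∑ i, fs i x) / N)
    (L σ0 σ α fstar : ℝ) (hL : 0 < L) (hα : 0 < α) (hαL : α < 1 / L)
    (hdiff : ∀ i, Differentiable ℝ (fs i))
    (hlip : ∀ i x y, ‖gradient (fs i) x - gradient (fs i) y‖ ≤ L * ‖x - y‖)
    (hmom1 : ∀ x, (∑ i, ‖gradient (fs i) x‖ ^ 2) / N ≤ σ0 ^ 2)
    (hmom2 : ∀ x, ‖gradient F x‖ ^ 2 ≤ σ0 ^ 2)
    (hvar : ∀ x, (∑ i, ‖gradient (fs i) x - gradient F x‖ ^ 2) / N ≤ σ ^ 2)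
    (hlow : ∀ x, fstar ≤ F x)
    {Ω : Type*} [MeasurableSpace Ω] (μ : Measure Ω) [IsProbabilityMeasure μ]
    (θ : ℕ → Ω → EuclideanSpace ℝ (Fin D))
    (gt g : ℕ → Ω → EuclideanSpace ℝ (Fin D))
    (idx : ℕ → Ω → Fin N) (eps : ℕ → Ω → ℝ)
    (x0 : EuclideanSpace ℝ (Fin D)) (hθ0 : ∀ ω, θ 0 ω = x0)
    (hθmeas : ∀ t, Measurable (θ t)) (hgtmeas : ∀ t, Measurable (gt t))
    (hidxmeas : ∀ t, Measurable (idx t))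
    (hupdate : ∀ t ω, θ (t + 1) ω = θ t ω - α • gt t ω)
    (hg : ∀ t ω, g t ω = gradient (fs (idx t ω)) (θ t ω))
    (heps : ∀ t ω, eps t ω = ‖gt t ω - g t ω‖)
    (huniform : ∀ t (j : Fin N), (μ {ω | idx t ω = j}).toReal = 1 / N)
    (hindep : ∀ t, IndepFun (idx t) (θ t) μ)
    (hgtint : ∀ t, Integrable (fun ω => ‖gt t ω‖ ^ 2) μ)
    (hepsint : ∀ t, Integrable (fun ω => eps t ω ^ 2) μ)
    (T : ℕ) (hT : 0 < T) :
    (1 / T) * ∑ t ∈ Finset.range T, ∫ ω, ‖gradient F (θ t ω)‖ ^ 2 ∂μ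
      ≤ (F x0 - fstar) / (T * α * (1 - α * L))
        + α * (2 * L * σ ^ 2 + σ0 ^ 2) / (2 * (1 - α * L))
        + (1 + α ^ 2 * L) * (∑ t ∈ Finset.range T, ∫ ω, eps t ω ^ 2 ∂μ)
            / (2 * T * α * (1 - α * L)) := by
  classical
  have hN' : (0:ℝ) < (N:ℝ) := by exact_mod_cast hN
  have hT' : (0:ℝ) < (T:ℝ) := by exact_mod_cast hT
  have hL0 : (0:ℝ) ≤ L := hL.le
  have hαL1 : α * L < 1 := by
    rw [lt_div_iff₀ hL] at hαL; exact hαL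
  have h1 : (0:ℝ) < 1 - α * L := by linarith
  have hσ0 : (0:ℝ) ≤ σ0 ^ 2 := le_trans (by positivity) (hmom2 0)
  have hσ : (0:ℝ) ≤ σ ^ 2 := le_trans (by positivity) (hvar 0)
  have hgradF : ∀ x, gradient F x = (N:ℝ)⁻¹ • ∑ i, gradient (fs i) x := by
    intro x; rw [hF]; exact gradient_avg fs hdiff x
  have hdiffF : Differentiable ℝ F := by
    have hsum : Differentiable ℝ (fun x => ∑ i, fs i x) :=
      Differentiable.fun_sum (fun i (_ : i ∈ Finset.univ) => hdiff i)
    rw [hF]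
    simp only [div_eq_mul_inv]
    exact hsum.mul_const ((N:ℝ)⁻¹)
  have hlipF : ∀ x y, ‖gradient F x - gradient F y‖ ≤ L * ‖x - y‖ := by
    intro x y
    rw [hgradF x, hgradF y, ← smul_sub, ← Finset.sum_sub_distrib, norm_smul]
    have h2 : ‖∑ i, (gradient (fs i) x - gradient (fs i) y)‖
        ≤ (N:ℝ) * (L * ‖x - y‖) := by
      calc ‖∑ i, (gradient (fs i) x - gradient (fs i) y)‖
          ≤ ∑ i, ‖gradient (fs i) x - gradient (fs i) y‖ := norm_sum_le _ _
        _ ≤ ∑ _i : Fin N, L * ‖x - y‖ := Finset.sum_le_sum (fun i _ => hlip i x y)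
        _ = (N:ℝ) * (L * ‖x - y‖) := by
            rw [Finset.sum_const, Finset.card_univ, Fintype.card_fin, nsmul_eq_mul]
    have h3 : ‖(N:ℝ)⁻¹‖ = (N:ℝ)⁻¹ := by
      rw [Real.norm_eq_abs, abs_of_nonneg (by positivity)]
    rw [h3]
    calc (N:ℝ)⁻¹ * ‖∑ i, (gradient (fs i) x - gradient (fs i) y)‖
        ≤ (N:ℝ)⁻¹ * ((N:ℝ) * (L * ‖x - y‖)) := by
          exact mul_le_mul_of_nonneg_left h2 (by positivity)
      _ = L * ‖x - y‖ := by field_simp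
  have hconti : ∀ i, Continuous (gradient (fs i)) := fun i =>
    (LipschitzWith.of_dist_le_mul (K := L.toNNReal) (fun x y => by
      rw [dist_eq_norm, dist_eq_norm]
      simpa [Real.coe_toNNReal L hL0] using hlip i x y)).continuous
  have hcontF : Continuous (gradient F) :=
    (LipschitzWith.of_dist_le_mul (K := L.toNNReal) (fun x y => by
      rw [dist_eq_norm, dist_eq_norm]
      simpa [Real.coe_toNNReal L hL0] using hlipF x y)).continuous
  have hcF : Continuous F := hdiffF.continuous
  set s0 := Real.sqrt (σ0^2) with hs0def
  set sN := Real.sqrt ((N:ℝ) * σ0^2) with hsNdef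
  have hs0n : 0 ≤ s0 := Real.sqrt_nonneg _
  have hsNn : 0 ≤ sN := Real.sqrt_nonneg _
  have hs0 : ∀ x, ‖gradient F x‖ ≤ s0 := fun x => Real.le_sqrt_of_sq_le (hmom2 x)
  have hib : ∀ i x, ‖gradient (fs i) x‖^2 ≤ (N:ℝ) * σ0^2 := by
    intro i x
    have h2 := hmom1 x
    rw [div_le_iff₀ hN'] at h2
    refine le_trans (Finset.single_le_sum (f := fun j => ‖gradient (fs j) x‖^2)
      (fun j _ => by positivity) (Finset.mem_univ i)) (le_trans h2 (by linarith))
  have hsN : ∀ i x, ‖gradient (fs i) x‖ ≤ sN := fun i x => Real.le_sqrt_of_sq_le (hib i x)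
  have hFlip : ∀ x y : EuclideanSpace ℝ (Fin D), ‖F y - F x‖ ≤ s0 * ‖y - x‖ := by
    intro x y
    refine Convex.norm_image_sub_le_of_norm_fderiv_le (fun z _ => hdiffF z)
      (fun z _ => ?_) convex_univ (Set.mem_univ x) (Set.mem_univ y)
    rw [← norm_gradient_eq_norm_fderiv]; exact hs0 z
  have hgtn : ∀ t, Integrable (fun ω => ‖gt t ω‖) μ := by
    intro t
    refine ((integrable_const (1:ℝ)).add (hgtint t)).mono'
      ((hgtmeas t).norm.aestronglyMeasurable) (Filter.Eventually.of_forall fun ω => ?_)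
    simp only [Pi.add_apply, norm_norm]
    nlinarith [sq_nonneg (‖gt t ω‖ - 1), norm_nonneg (gt t ω)]
  have hFθ : ∀ t, Integrable (fun ω => F (θ t ω)) μ := by
    intro t
    induction t with
    | zero =>
      exact (integrable_const (F x0)).congr
        (Filter.Eventually.of_forall fun ω => by show F x0 = F (θ 0 ω); rw [hθ0 ω])
    | succ t ih =>
      refine (ih.abs.add ((hgtn t).const_mul (s0 * α))).mono'
        ((hcF.measurable.comp (hθmeas (t+1))).aestronglyMeasurable)
        (Filter.Eventually.of_forall fun ω => ?_)
      have h1' := hFlip (θ t ω) (θ (t+1) ω)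
      have h2' : θ (t+1) ω - θ t ω = -(α • gt t ω) := by
        rw [hupdate t ω]; abel
      rw [h2', norm_neg, norm_smul] at h1'
      simp only [Real.norm_eq_abs, abs_of_nonneg hα.le] at h1'
      have h3' := abs_add_le (F (θ t ω)) (F (θ (t+1) ω) - F (θ t ω))
      simp only [add_sub_cancel] at h3'
      show ‖F (θ (t+1) ω)‖ ≤ |F (θ t ω)| + s0 * α * ‖gt t ω‖
      rw [Real.norm_eq_abs]
      nlinarith [h1', h3']
  -- A facts
  have hAint : ∀ t, Integrable (fun ω => ‖gradient F (θ t ω)‖^2) μ := fun t =>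
    integrable_of_bounded ((((hcontF.norm.pow 2).measurable).comp
      (hθmeas t)).aestronglyMeasurable) (σ0^2) (fun ω => by
        rw [abs_of_nonneg (by positivity)]; exact hmom2 _)
  have hA_nonneg : ∀ t, 0 ≤ ∫ ω, ‖gradient F (θ t ω)‖^2 ∂μ := fun t =>
    integral_nonneg (fun ω => by positivity)
  have hA_le : ∀ t, ∫ ω, ‖gradient F (θ t ω)‖^2 ∂μ ≤ σ0^2 := by
    intro t
    calc ∫ ω, ‖gradient F (θ t ω)‖^2 ∂μ ≤ ∫ _ω, σ0^2 ∂μ :=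
        integral_mono (hAint t) (integrable_const _) (fun ω => hmom2 _)
      _ = σ0^2 := by simp
  -- P facts
  have hPkey : ∀ t, Integrable (fun ω => ⟪gradient F (θ t ω), g t ω⟫) μ ∧
      ∫ ω, ⟪gradient F (θ t ω), g t ω⟫ ∂μ = ∫ ω, ‖gradient F (θ t ω)‖^2 ∂μ := by
    intro t
    have heq : (fun ω => ⟪gradient F (θ t ω), g t ω⟫)
        = fun ω => (fun (j : Fin N) x => ⟪gradient F x, gradient (fs j) x⟫)
            (idx t ω) (θ t ω) :=
      funext fun ω => by rw [hg t ω]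
    have hbnd : ∀ (j : Fin N) (x : EuclideanSpace ℝ (Fin D)),
        |⟪gradient F x, gradient (fs j) x⟫| ≤ s0 * sN := by
      intro j x
      calc |⟪gradient F x, gradient (fs j) x⟫| ≤ ‖gradient F x‖ * ‖gradient (fs j) x‖ :=
          abs_real_inner_le_norm _ _
        _ ≤ s0 * sN := mul_le_mul (hs0 x) (hsN j x) (norm_nonneg _) hs0n
    have hsp := indep_split (μ := μ) (idx t) (θ t) (hidxmeas t) (hθmeas t) (hindep t)
      (huniform t) (fun j x => ⟪gradient F x, gradient (fs j) x⟫)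
      (fun j => (hcontF.inner (hconti j)).measurable) (s0 * sN) hbnd
    constructor
    · rw [heq]; exact hsp.1
    · rw [heq, hsp.2]
      have hja : ∀ j : Fin N,
          Integrable (fun ω => ⟪gradient F (θ t ω), gradient (fs j) (θ t ω)⟫) μ := fun j =>
        integrable_of_bounded (((hcontF.inner (hconti j)).measurable.comp
          (hθmeas t)).aestronglyMeasurable) (s0*sN) (fun ω => hbnd j _)
      rw [← integral_finset_sum _ (fun j _ => hja j), ← integral_div]
      refine integral_congr_ae (Filter.Eventually.of_forall fun ω => ?_)
      show (∑ j, ⟪gradient F (θ t ω), gradient (fs j) (θ t ω)⟫) / (N:ℝ)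
        = ‖gradient F (θ t ω)‖^2
      rw [← inner_sum, div_eq_inv_mul, ← real_inner_smul_right, ← hgradF (θ t ω),
        real_inner_self_eq_norm_sq]
  -- U facts
  have hUkey : ∀ t, Integrable (fun ω => ‖g t ω - gradient F (θ t ω)‖^2) μ ∧
      ∫ ω, ‖g t ω - gradient F (θ t ω)‖^2 ∂μ ≤ σ^2 := by
    intro t
    have heq : (fun ω => ‖g t ω - gradient F (θ t ω)‖^2)
        = fun ω => (fun (j : Fin N) x => ‖gradient (fs j) x - gradient F x‖^2)
            (idx t ω) (θ t ω) :=
      funext fun ω => by rw [hg t ω]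
    have hbnd : ∀ (j : Fin N) (x : EuclideanSpace ℝ (Fin D)),
        |‖gradient (fs j) x - gradient F x‖^2| ≤ (sN + s0)^2 := by
      intro j x
      rw [abs_of_nonneg (by positivity)]
      have h4 : ‖gradient (fs j) x - gradient F x‖ ≤ sN + s0 :=
        le_trans (norm_sub_le _ _) (add_le_add (hsN j x) (hs0 x))
      nlinarith [norm_nonneg (gradient (fs j) x - gradient F x)]
    have hja : ∀ j : Fin N,
        Integrable (fun ω => ‖gradient (fs j) (θ t ω) - gradient F (θ t ω)‖^2) μ := fun j =>
      integrable_of_bounded ((((hconti j).sub hcontF).norm.pow 2).measurable.comp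
        (hθmeas t) |>.aestronglyMeasurable) ((sN + s0)^2) (fun ω => hbnd j _)
    have hsp := indep_split (μ := μ) (idx t) (θ t) (hidxmeas t) (hθmeas t) (hindep t)
      (huniform t) (fun j x => ‖gradient (fs j) x - gradient F x‖^2)
      (fun j => (((hconti j).sub hcontF).norm.pow 2).measurable) ((sN + s0)^2) hbnd
    constructor
    · rw [heq]; exact hsp.1
    · rw [heq, hsp.2]
      rw [← integral_finset_sum _ (fun j _ => hja j), ← integral_div]
      calc ∫ ω, (∑ j, ‖gradient (fs j) (θ t ω) - gradient F (θ t ω)‖^2) / (N:ℝ) ∂μ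
          ≤ ∫ _ω, σ^2 ∂μ := by
            refine integral_mono ?_ (integrable_const _) (fun ω => hvar (θ t ω))
            exact (integrable_finset_sum _ (fun j _ => hja j)).div_const (N:ℝ)
        _ = σ^2 := by simp
  have hU_nonneg : ∀ t, 0 ≤ ∫ ω, ‖g t ω - gradient F (θ t ω)‖^2 ∂μ := fun t =>
    integral_nonneg (fun ω => by positivity)
  have hW_nonneg : ∀ t, 0 ≤ ∫ ω, eps t ω^2 ∂μ := fun t =>
    integral_nonneg (fun ω => sq_nonneg _)
  by_cases hsmall : L * α^2 ≤ 1
  · -- main case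
    obtain ⟨cP, hcP⟩ : ∃ c : ℝ, c = -α + L*α^2 - (L*α^2)*(α*(1-α*L)) := ⟨_, rfl⟩
    obtain ⟨cA, hcA⟩ : ∃ c : ℝ, c = L*α^2/2 + (α*(1-α*L))^2/2 - L*α^2 + (L*α^2)*(α*(1-α*L)) :=
      ⟨_, rfl⟩
    obtain ⟨cU, hcU⟩ : ∃ c : ℝ, c = (L*α^2)/2 + (L*α^2)^2/2 := ⟨_, rfl⟩
    obtain ⟨cW, hcW⟩ : ∃ c : ℝ, c = (L*α^2)/2 + 1/2 := ⟨_, rfl⟩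
    have step : ∀ t, α*(1-α*L) * (∫ ω, ‖gradient F (θ t ω)‖^2 ∂μ)
        ≤ ((∫ ω, F (θ t ω) ∂μ) - (∫ ω, F (θ (t+1) ω) ∂μ))
          + ((α^2*L*σ^2 + α^2/2*σ0^2) + (1+α^2*L)/2 * (∫ ω, eps t ω^2 ∂μ)) := by
      intro t
      -- pointwise inequality
      have hpt : ∀ ω, F (θ (t+1) ω) ≤ F (θ t ω)
          + (cP * ⟪gradient F (θ t ω), g t ω⟫
            + (cA * ‖gradient F (θ t ω)‖^2
              + (cU * ‖g t ω - gradient F (θ t ω)‖^2 + cW * eps t ω^2))) := by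
        intro ω
        have hdesc := descent_lemma F hdiffF L hL0 hlipF (θ t ω) (-(α • gt t ω))
        have hθeq : θ t ω + -(α • gt t ω) = θ (t+1) ω := by
          rw [hupdate t ω]; abel
        rw [hθeq, inner_neg_right, real_inner_smul_right, norm_neg, norm_smul,
          Real.norm_eq_abs, abs_of_nonneg hα.le, mul_pow] at hdesc
        have hgt_eq : gt t ω = gradient F (θ t ω)
            + (g t ω - gradient F (θ t ω)) + (gt t ω - g t ω) := by abel
        have hexp : ‖gt t ω‖^2 = ‖gradient F (θ t ω)‖^2
            + ‖g t ω - gradient F (θ t ω)‖^2 + ‖gt t ω - g t ω‖^2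
            + 2*⟪gradient F (θ t ω), g t ω - gradient F (θ t ω)⟫
            + 2*⟪gradient F (θ t ω), gt t ω - g t ω⟫
            + 2*⟪g t ω - gradient F (θ t ω), gt t ω - g t ω⟫ := by
          conv_lhs => rw [hgt_eq]
          exact inner_expand3 _ _ _
        have hinner : ⟪gradient F (θ t ω), gt t ω⟫ = ‖gradient F (θ t ω)‖^2
            + ⟪gradient F (θ t ω), g t ω - gradient F (θ t ω)⟫
            + ⟪gradient F (θ t ω), gt t ω - g t ω⟫ := by
          conv_lhs => rw [hgt_eq]
          rw [inner_add_right, inner_add_right, real_inner_self_eq_norm_sq]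
        have hPd : ⟪gradient F (θ t ω), g t ω⟫ = ‖gradient F (θ t ω)‖^2
            + ⟪gradient F (θ t ω), g t ω - gradient F (θ t ω)⟫ := by
          rw [inner_sub_right, real_inner_self_eq_norm_sq]; ring
        have hWd : eps t ω^2 = ‖gt t ω - g t ω‖^2 := by rw [heps t ω]
        have hyoung := young_ineq (L*α^2) (α*(1-α*L))
          (g t ω - gradient F (θ t ω)) (gradient F (θ t ω)) (gt t ω - g t ω)
        rw [hexp, hinner] at hdesc
        rw [hPd, hWd]
        rw [hcP, hcA, hcU, hcW]
        linarith [hdesc, hyoung,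
          real_inner_comm (g t ω - gradient F (θ t ω)) (gradient F (θ t ω))]
      -- integrate
      have hPint := (hPkey t).1
      have hUint := (hUkey t).1
      have hi4 : Integrable (fun ω => cU * ‖g t ω - gradient F (θ t ω)‖^2
          + cW * eps t ω^2) μ := (hUint.const_mul cU).add ((hepsint t).const_mul cW)
      have hi3 : Integrable (fun ω => cA * ‖gradient F (θ t ω)‖^2
          + (cU * ‖g t ω - gradient F (θ t ω)‖^2 + cW * eps t ω^2)) μ :=
        ((hAint t).const_mul cA).add hi4
      have hi2 : Integrable (fun ω => cP * ⟪gradient F (θ t ω), g t ω⟫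
          + (cA * ‖gradient F (θ t ω)‖^2
            + (cU * ‖g t ω - gradient F (θ t ω)‖^2 + cW * eps t ω^2))) μ :=
        (hPint.const_mul cP).add hi3
      have hmono := integral_mono (μ := μ) (hFθ (t+1)) ((hFθ t).add hi2) hpt
      simp only [Pi.add_apply] at hmono
      rw [integral_add (hFθ t) hi2] at hmono
      rw [integral_add (hPint.const_mul cP) hi3] at hmono
      rw [integral_add ((hAint t).const_mul cA) hi4] at hmono
      rw [integral_add (hUint.const_mul cU) ((hepsint t).const_mul cW)] at hmono
      rw [integral_const_mul, integral_const_mul, integral_const_mul, integral_const_mul] at hmono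
      rw [(hPkey t).2] at hmono
      -- now combine
      have hx0 : (0:ℝ) ≤ α*L := mul_nonneg hα.le hL0
      have hb1 : (1-α*L)^2 ≤ 1 := by nlinarith [mul_le_mul_of_nonneg_left hαL1.le hx0]
      have hLa2 : (0:ℝ) ≤ L*α^2 := by positivity
      have e1 : (cP + cA + α*(1-α*L)) * (∫ ω, ‖gradient F (θ t ω)‖^2 ∂μ)
          ≤ α^2/2*σ0^2 := by
        have h5 : cP + cA + α*(1-α*L) = α^2*(1-α*L)^2/2 - L*α^2/2 := by
          rw [hcP, hcA]; ring
        rw [h5]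
        nlinarith [hA_le t, hA_nonneg t, sq_nonneg α,
          mul_nonneg (sq_nonneg α) (hA_nonneg t)]
      have e2 : cU * (∫ ω, ‖g t ω - gradient F (θ t ω)‖^2 ∂μ) ≤ α^2*L*σ^2 := by
        rw [hcU]
        nlinarith [(hUkey t).2, hU_nonneg t, hLa2, hsmall,
          mul_le_mul_of_nonneg_left (hUkey t).2 hLa2,
          mul_nonneg hLa2 (hU_nonneg t),
          mul_nonneg (mul_nonneg hLa2 hLa2) (hU_nonneg t),
          mul_le_mul_of_nonneg_left (mul_le_mul_of_nonneg_left (hUkey t).2 hLa2) hLa2]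
      have e3 : cW * (∫ ω, eps t ω^2 ∂μ) = (1+α^2*L)/2 * (∫ ω, eps t ω^2 ∂μ) := by
        rw [hcW]; ring
      linarith [hmono, e1, e2, e3.le, e3.ge]
    -- summation
    have htele : ∑ t ∈ Finset.range T,
        ((∫ ω, F (θ t ω) ∂μ) - (∫ ω, F (θ (t+1) ω) ∂μ))
        = (∫ ω, F (θ 0 ω) ∂μ) - (∫ ω, F (θ T ω) ∂μ) :=
      Finset.sum_range_sub' (fun t => ∫ ω, F (θ t ω) ∂μ) T
    have hEF0 : (∫ ω, F (θ 0 ω) ∂μ) = F x0 := by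
      calc ∫ ω, F (θ 0 ω) ∂μ = ∫ _ω, F x0 ∂μ :=
          integral_congr_ae (Filter.Eventually.of_forall fun ω => by
            show F (θ 0 ω) = F x0; rw [hθ0 ω])
        _ = F x0 := by simp
    have hEFT : fstar ≤ ∫ ω, F (θ T ω) ∂μ := by
      calc fstar = ∫ _ω, fstar ∂μ := by simp
        _ ≤ ∫ ω, F (θ T ω) ∂μ :=
          integral_mono (integrable_const _) (hFθ T) (fun ω => hlow _)
    have hsum : α*(1-α*L) * ∑ t ∈ Finset.range T, ∫ ω, ‖gradient F (θ t ω)‖^2 ∂μ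
        ≤ (F x0 - fstar) + T*(α^2*L*σ^2 + α^2/2*σ0^2)
          + (1+α^2*L)/2 * ∑ t ∈ Finset.range T, ∫ ω, eps t ω^2 ∂μ := by
      have hs := Finset.sum_le_sum (fun t (_ : t ∈ Finset.range T) => step t)
      have hL1 : ∑ t ∈ Finset.range T,
          (α*(1-α*L) * ∫ ω, ‖gradient F (θ t ω)‖^2 ∂μ)
          = α*(1-α*L) * ∑ t ∈ Finset.range T, ∫ ω, ‖gradient F (θ t ω)‖^2 ∂μ := by
        rw [Finset.mul_sum]
      have hR1 : ∑ t ∈ Finset.range T,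
          (((∫ ω, F (θ t ω) ∂μ) - (∫ ω, F (θ (t+1) ω) ∂μ))
            + ((α^2*L*σ^2 + α^2/2*σ0^2) + (1+α^2*L)/2 * (∫ ω, eps t ω^2 ∂μ)))
          = ((∫ ω, F (θ 0 ω) ∂μ) - (∫ ω, F (θ T ω) ∂μ))
            + ((T:ℝ)*(α^2*L*σ^2 + α^2/2*σ0^2)
              + (1+α^2*L)/2 * ∑ t ∈ Finset.range T, ∫ ω, eps t ω^2 ∂μ) := by
        rw [Finset.sum_add_distrib, htele, Finset.sum_add_distrib, Finset.sum_const,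
          Finset.card_range, nsmul_eq_mul, ← Finset.mul_sum]
      rw [hL1, hR1] at hs
      linarith [hs, hEFT, hEF0.le, hEF0.ge]
    -- final division
    rw [one_div, inv_mul_le_iff₀ hT']
    have h7 : ∑ t ∈ Finset.range T, ∫ ω, ‖gradient F (θ t ω)‖^2 ∂μ
        ≤ ((F x0 - fstar) + T*(α^2*L*σ^2 + α^2/2*σ0^2)
            + (1+α^2*L)/2 * ∑ t ∈ Finset.range T, ∫ ω, eps t ω^2 ∂μ) / (α*(1-α*L)) := by
      rw [le_div_iff₀ (mul_pos hα h1)]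
      nlinarith [hsum]
    refine h7.trans (le_of_eq ?_)
    field_simp
  · -- trivial case: large stepsize
    push_neg at hsmall
    have htr : 2 - 2*(α*L) ≤ α := by nlinarith [sq_nonneg (α - 1), hsmall, hα, hL]
    have hWsum : 0 ≤ ∑ t ∈ Finset.range T, ∫ ω, eps t ω^2 ∂μ :=
      Finset.sum_nonneg (fun t _ => hW_nonneg t)
    have hlhs : (1/(T:ℝ)) * ∑ t ∈ Finset.range T, ∫ ω, ‖gradient F (θ t ω)‖^2 ∂μ
        ≤ σ0^2 := by
      have h8 : ∑ t ∈ Finset.range T, ∫ ω, ‖gradient F (θ t ω)‖^2 ∂μ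
          ≤ ∑ _t ∈ Finset.range T, σ0^2 :=
        Finset.sum_le_sum (fun t _ => hA_le t)
      rw [Finset.sum_const, Finset.card_range, nsmul_eq_mul] at h8
      rw [one_div, inv_mul_le_iff₀ hT']
      linarith [h8]
    have hterm2 : σ0^2 ≤ α * (2*L*σ^2 + σ0^2) / (2*(1-α*L)) := by
      rw [le_div_iff₀ (by linarith : (0:ℝ) < 2*(1-α*L))]
      nlinarith [mul_nonneg (mul_nonneg hα.le hL0) hσ,
        mul_nonneg (by linarith : (0:ℝ) ≤ α - (2 - 2*(α*L))) hσ0]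
    have hterm1 : 0 ≤ (F x0 - fstar) / ((T:ℝ)*α*(1-α*L)) :=
      div_nonneg (by linarith [hlow x0]) (le_of_lt (mul_pos (mul_pos hT' hα) h1))
    have hterm3 : 0 ≤ (1+α^2*L) * (∑ t ∈ Finset.range T, ∫ ω, eps t ω^2 ∂μ)
        / (2*(T:ℝ)*α*(1-α*L)) := by
      apply div_nonneg (mul_nonneg (by positivity) hWsum)
      have : (0:ℝ) < 2*(T:ℝ)*α*(1-α*L) := by
        have := mul_pos (mul_pos (mul_pos (by norm_num : (0:ℝ) < 2) hT') hα) h1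
        linarith [this]
      linarith [this]
    linarith [hlhs, hterm2, hterm1, hterm3]
end

section
/- In the SpaceSaving algorithm with capacity $c$ (a single bucket with $c$ slots, where on overflow the minimum-score entry is replaced and incremented), the minimum recorded score after processing a stream never exceeds $S/c$, where $S$ is the total score inserted so far. Consequently, any feature whose true total score strictly exceeds $S_{\text{other}}/(c-1)$, where $S_{\text{other}}$ is the total score of all other features, is present in the structure at the end. -/
/-- One insertion step of the SpaceSaving algorithm with capacity `c`:
the state is a list of (feature, counter) pairs. If the incoming feature is
recorded, its counter is increased; otherwise, if there is room, it is added;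
otherwise the minimum-counter entry is replaced and its counter incremented. -/
noncomputable def ssStep (c : ℕ) (st : List (ℕ × ℝ)) (p : ℕ × ℝ) : List (ℕ × ℝ) :=
  if (st.map Prod.fst).contains p.1 then
    st.map (fun q => if q.1 = p.1 then (q.1, q.2 + p.2) else q)
  else if st.length < c then
    st ++ [p]
  else
    let m := st.foldl (fun acc q => if q.2 < acc.2 then q else acc) st.headI
    st.map (fun q => if q = m then (p.1, m.2 + p.2) else q)

/-- Running SpaceSaving with capacity `c` over a stream of (feature, score) pairs. -/
noncomputable def ssRun (c : ℕ) (stream : List (ℕ × ℝ)) : List (ℕ × ℝ) :=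
  stream.foldl (ssStep c) []



lemma foldl_min_spec :
    ∀ (l : List (ℕ × ℝ)) (a : ℕ × ℝ),
      ((l.foldl (fun acc q => if q.2 < acc.2 then q else acc) a) = a ∨
        (l.foldl (fun acc q => if q.2 < acc.2 then q else acc) a) ∈ l) ∧
      (l.foldl (fun acc q => if q.2 < acc.2 then q else acc) a).2 ≤ a.2 ∧
      ∀ q ∈ l, (l.foldl (fun acc q => if q.2 < acc.2 then q else acc) a).2 ≤ q.2 := by
  intro l
  induction l with
  | nil => simp
  | cons x xs ih =>
    intro a
    simp only [List.foldl_cons]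
    by_cases h : x.2 < a.2
    · simp only [if_pos h]
      obtain ⟨hmem, hle, hall⟩ := ih x
      refine ⟨?_, ?_, ?_⟩
      · rcases hmem with h1 | h1
        · exact Or.inr (by simp [h1])
        · exact Or.inr (by simp [h1])
      · exact le_trans hle (le_of_lt h)
      · intro q hq
        rcases List.mem_cons.mp hq with rfl | hq
        · exact hle
        · exact hall q hq
    · simp only [if_neg h]
      obtain ⟨hmem, hle, hall⟩ := ih a
      refine ⟨?_, hle, ?_⟩
      · rcases hmem with h1 | h1
        · exact Or.inl h1
        · exact Or.inr (by simp [h1])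
      · intro q hq
        rcases List.mem_cons.mp hq with rfl | hq
        · exact le_trans hle (not_lt.mp h)
        · exact hall q hq

lemma decomp {st : List (ℕ × ℝ)} (hnd : (st.map Prod.fst).Nodup) {q : ℕ × ℝ} (hq : q ∈ st) :
    ∃ a b, st = a ++ q :: b ∧ (∀ r ∈ a, r.1 ≠ q.1) ∧ (∀ r ∈ b, r.1 ≠ q.1) := by
  obtain ⟨a, b, rfl⟩ := List.append_of_mem hq
  refine ⟨a, b, rfl, ?_, ?_⟩
  · intro r hr hcon
    have : (a.map Prod.fst ++ q.1 :: b.map Prod.fst).Nodup := by simpa using hnd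
    have h2 := (List.nodup_cons.mp (List.nodup_middle.mp this)).1
    exact h2 (List.mem_append.mpr (Or.inl (hcon ▸ List.mem_map_of_mem (f := Prod.fst) hr)))
  · intro r hr hcon
    have : (a.map Prod.fst ++ q.1 :: b.map Prod.fst).Nodup := by simpa using hnd
    have h2 := (List.nodup_cons.mp (List.nodup_middle.mp this)).1
    exact h2 (List.mem_append.mpr (Or.inr (hcon ▸ List.mem_map_of_mem (f := Prod.fst) hr)))

lemma filter_sum (k : ℕ) (l : List (ℕ × ℝ)) :
    ((l.filter (fun p => p.1 = k)).map Prod.snd).sum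
      + ((l.filter (fun p => p.1 ≠ k)).map Prod.snd).sum = (l.map Prod.snd).sum := by
  induction l with
  | nil => simp
  | cons x xs ih =>
    by_cases h : x.1 = k <;> simp [List.filter_cons, h, ← ih] <;> ring

lemma list_min_le (l : List ℝ) (b : ℝ) (h : ∀ x ∈ l, b ≤ x) : (l.length : ℝ) * b ≤ l.sum := by
  have := List.card_nsmul_le_sum l b h
  simpa [nsmul_eq_mul] using this

noncomputable def sMin (st : List (ℕ × ℝ)) : ℕ × ℝ :=
  st.foldl (fun acc q => if q.2 < acc.2 then q else acc) st.headI

lemma ssStep_of_mem {c : ℕ} {st : List (ℕ × ℝ)} {p : ℕ × ℝ} (h : p.1 ∈ st.map Prod.fst) :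
    ssStep c st p = st.map (fun q => if q.1 = p.1 then (q.1, q.2 + p.2) else q) := by
  simp [ssStep, h]

lemma ssStep_of_room {c : ℕ} {st : List (ℕ × ℝ)} {p : ℕ × ℝ} (h : p.1 ∉ st.map Prod.fst)
    (h2 : st.length < c) : ssStep c st p = st ++ [p] := by
  simp [ssStep, h, h2]

lemma ssStep_of_full {c : ℕ} {st : List (ℕ × ℝ)} {p : ℕ × ℝ} (h : p.1 ∉ st.map Prod.fst)
    (h2 : ¬ st.length < c) :
    ssStep c st p = st.map (fun q => if q = sMin st then (p.1, (sMin st).2 + p.2) else q) := by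
  simp [ssStep, h, h2, sMin]
  intro a b _
  rfl

lemma map_id_of {α : Type*} {l : List α} {f : α → α} (h : ∀ x ∈ l, f x = x) :
    l.map f = l := by
  conv_rhs => rw [← List.map_id l]
  exact List.map_congr_left h

lemma headI_mem' {α : Type*} [Inhabited α] {l : List α} (h : l ≠ []) : l.headI ∈ l := by
  cases l with
  | nil => simp at h
  | cons x xs => simp



def SSInv (c : ℕ) (F : ℕ → ℝ) (S : ℝ) (st : List (ℕ × ℝ)) : Prop :=
  (st.map Prod.fst).Nodup ∧
  st.length ≤ c ∧
  (∀ q ∈ st, 0 < q.2) ∧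
  ((st.map Prod.snd).sum = S) ∧
  (∀ k, k ∉ st.map Prod.fst → F k = 0 ∨ (st.length = c ∧ ∀ q ∈ st, F k ≤ q.2)) ∧
  (∀ q ∈ st, F q.1 ≤ q.2)

lemma step_inv {c : ℕ} (hc : 2 ≤ c) {F : ℕ → ℝ} {S : ℝ} {st : List (ℕ × ℝ)} {p : ℕ × ℝ}
    (hp : 0 < p.2) (h : SSInv c F S st) :
    SSInv c (fun k => F k + if k = p.1 then p.2 else 0) (S + p.2) (ssStep c st p) := by
  obtain ⟨hnd, hlen, hpos, hsum, habs, hpres⟩ := h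
  by_cases hmem : p.1 ∈ st.map Prod.fst
  · -- increment case
    rw [ssStep_of_mem hmem]
    obtain ⟨q, hq, hq1⟩ : ∃ q ∈ st, q.1 = p.1 := by simpa using hmem
    obtain ⟨a, b, hst, ha, hb⟩ := decomp hnd hq
    subst hst
    have hst' : (a ++ q :: b).map (fun r => if r.1 = p.1 then (r.1, r.2 + p.2) else r)
        = a ++ (q.1, q.2 + p.2) :: b := by
      simp only [List.map_append, List.map_cons, if_pos hq1]
      rw [map_id_of (fun r hr => if_neg (hq1 ▸ ha r hr)),
          map_id_of (fun r hr => if_neg (hq1 ▸ hb r hr))]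
    rw [hst']
    have hkeys : (a ++ (q.1, q.2 + p.2) :: b).map Prod.fst = (a ++ q :: b).map Prod.fst := by
      simp
    refine ⟨by rw [hkeys]; exact hnd, by simpa using hlen, ?_, ?_, ?_, ?_⟩
    · intro r hr
      rcases List.mem_append.mp hr with h1 | h1
      · exact hpos r (by simp [h1])
      · rcases List.mem_cons.mp h1 with rfl | h1
        · have hq2 := hpos q (by simp)
          show (0:ℝ) < q.2 + p.2
          linarith
        · exact hpos r (by simp [h1])
    · have hs : ((a ++ q :: b).map Prod.snd).sum = S := hsum
      simp only [List.map_append, List.map_cons, List.sum_append, List.sum_cons] at hs ⊢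
      linarith
    · intro k hk
      rw [hkeys] at hk
      have hknp : k ≠ p.1 := fun hkp => hk (hkp ▸ hmem)
      rcases habs k hk with h0 | ⟨hl, hall⟩
      · left; simp [h0, hknp]
      · right
        refine ⟨by simpa using hl, ?_⟩
        intro r hr
        simp only [if_neg hknp, add_zero]
        rcases List.mem_append.mp hr with h1 | h1
        · exact hall r (by simp [h1])
        · rcases List.mem_cons.mp h1 with rfl | h1
          · have h2 := hall q (by simp)
            show F k ≤ q.2 + p.2
            linarith
          · exact hall r (by simp [h1])
    · intro r hr
      rcases List.mem_append.mp hr with h1 | h1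
      · have h2 : r.1 ≠ p.1 := hq1 ▸ ha r h1
        simp only [if_neg h2, add_zero]
        exact hpres r (by simp [h1])
      · rcases List.mem_cons.mp h1 with rfl | h1
        · have h2 := hpres q (by simp)
          show F q.1 + (if q.1 = p.1 then p.2 else 0) ≤ q.2 + p.2
          rw [if_pos hq1]
          linarith
        · have h2 : r.1 ≠ p.1 := hq1 ▸ hb r h1
          simp only [if_neg h2, add_zero]
          exact hpres r (by simp [h1])
  · by_cases hroom : st.length < c
    · -- append case
      rw [ssStep_of_room hmem hroom]
      have hFp : F p.1 = 0 := by
        rcases habs p.1 hmem with h0 | ⟨hl, _⟩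
        · exact h0
        · omega
      refine ⟨?_, by simpa using hroom, ?_, ?_, ?_, ?_⟩
      · simp only [List.map_append, List.map_cons, List.map_nil]
        rw [List.nodup_append]
        refine ⟨hnd, List.nodup_singleton _, ?_⟩
        intro x hx y hy hxy
        simp only [List.mem_singleton] at hy
        subst hy
        subst hxy
        exact hmem hx
      · intro r hr
        rcases List.mem_append.mp hr with h1 | h1
        · exact hpos r h1
        · simp at h1; subst h1; exact hp
      · simp [hsum]
      · intro k hk
        simp only [List.map_append, List.map_cons, List.map_nil, List.mem_append,
          List.mem_singleton] at hk
        push_neg at hk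
        have hknp : k ≠ p.1 := hk.2
        rcases habs k hk.1 with h0 | ⟨hl, _⟩
        · left; simp [h0, hknp]
        · omega
      · intro r hr
        rcases List.mem_append.mp hr with h1 | h1
        · have h2 : r.1 ≠ p.1 := fun hc' => hmem (hc' ▸ List.mem_map_of_mem (f := Prod.fst) h1)
          simp only [if_neg h2, add_zero]
          exact hpres r h1
        · simp at h1; subst h1
          simp [hFp]
    · -- eviction case
      rw [ssStep_of_full hmem hroom]
      have hlenc : st.length = c := le_antisymm hlen (not_lt.mp hroom)
      have hne : st ≠ [] := by
        intro h0; rw [h0] at hlenc; simp at hlenc; omega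
      obtain ⟨hm1, _, hmin⟩ := foldl_min_spec st st.headI
      have hmmem : sMin st ∈ st := by
        rcases hm1 with h1 | h1
        · rw [sMin, h1]; exact headI_mem' hne
        · exact h1
      set m := sMin st with hmdef
      have hmin' : ∀ q ∈ st, m.2 ≤ q.2 := hmin
      have hmpos : 0 < m.2 := hpos m hmmem
      have hFm : F m.1 ≤ m.2 := hpres m hmmem
      have hFp : F p.1 ≤ m.2 := by
        rcases habs p.1 hmem with h0 | ⟨_, hall⟩
        · rw [h0]; exact le_of_lt hmpos
        · exact hall m hmmem
      obtain ⟨a, b, hst, ha, hb⟩ := decomp hnd hmmem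
      have hane : ∀ r ∈ a, r ≠ m := fun r hr hc' => ha r hr (hc' ▸ rfl)
      have hbne : ∀ r ∈ b, r ≠ m := fun r hr hc' => hb r hr (hc' ▸ rfl)
      have hmem_a : ∀ r ∈ a, r ∈ st := by
        intro r hr; rw [hst]; exact List.mem_append.mpr (Or.inl hr)
      have hmem_b : ∀ r ∈ b, r ∈ st := by
        intro r hr; rw [hst]; exact List.mem_append.mpr (Or.inr (List.mem_cons_of_mem _ hr))
      have hst' : st.map (fun r => if r = m then (p.1, m.2 + p.2) else r)
          = a ++ (p.1, m.2 + p.2) :: b := by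
        rw [hst]
        simp only [List.map_append, List.map_cons, if_pos rfl]
        rw [map_id_of (fun r hr => if_neg (hane r hr)),
            map_id_of (fun r hr => if_neg (hbne r hr))]
        simp
      rw [hst']
      have hkeysold : (a.map Prod.fst ++ m.1 :: b.map Prod.fst).Nodup := by
        rw [hst] at hnd; simpa using hnd
      have hpa : p.1 ∉ a.map Prod.fst ∧ p.1 ≠ m.1 ∧ p.1 ∉ b.map Prod.fst := by
        rw [hst] at hmem
        simp only [List.map_append, List.map_cons, List.mem_append, List.mem_cons] at hmem
        push_neg at hmem
        exact ⟨hmem.1, hmem.2.1, hmem.2.2⟩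
      have hlen' : (a ++ (p.1, m.2 + p.2) :: b).length = c := by
        have h1 : (a ++ m :: b).length = c := hst ▸ hlenc
        simpa using h1
      have hr_old : ∀ r, r ∈ a ∨ r ∈ b → r.1 ≠ p.1 := by
        intro r hr hrp
        rcases hr with h1 | h1
        · exact hpa.1 (hrp ▸ List.mem_map_of_mem (f := Prod.fst) h1)
        · exact hpa.2.2 (hrp ▸ List.mem_map_of_mem (f := Prod.fst) h1)
      refine ⟨?_, le_of_eq hlen', ?_, ?_, ?_, ?_⟩
      · have hmid := List.nodup_cons.mp (List.nodup_middle.mp hkeysold)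
        simp only [List.map_append, List.map_cons]
        refine List.nodup_middle.mpr (List.nodup_cons.mpr ⟨?_, hmid.2⟩)
        intro hcon
        rcases List.mem_append.mp hcon with h1 | h1
        · exact hpa.1 h1
        · exact hpa.2.2 h1
      · intro r hr
        rcases List.mem_append.mp hr with h1 | h1
        · exact hpos r (hmem_a r h1)
        · rcases List.mem_cons.mp h1 with rfl | h1
          · show (0:ℝ) < m.2 + p.2
            linarith
          · exact hpos r (hmem_b r h1)
      · have hs : ((a ++ m :: b).map Prod.snd).sum = S := hst ▸ hsum
        simp only [List.map_append, List.map_cons, List.sum_append, List.sum_cons] at hs ⊢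
        linarith
      · intro k hk
        simp only [List.map_append, List.map_cons, List.mem_append, List.mem_cons] at hk
        push_neg at hk
        obtain ⟨hka, hkp, hkb⟩ := hk
        simp only [if_neg hkp, add_zero]
        by_cases hkm : k = m.1
        · subst hkm
          right
          refine ⟨hlen', ?_⟩
          intro r hr
          rcases List.mem_append.mp hr with h1 | h1
          · exact le_trans hFm (hmin' r (hmem_a r h1))
          · rcases List.mem_cons.mp h1 with rfl | h1
            · show F m.1 ≤ m.2 + p.2
              linarith
            · exact le_trans hFm (hmin' r (hmem_b r h1))
        · have hkold : k ∉ st.map Prod.fst := by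
            rw [hst]
            simp only [List.map_append, List.map_cons, List.mem_append, List.mem_cons]
            push_neg
            exact ⟨hka, hkm, hkb⟩
          rcases habs k hkold with h0 | ⟨_, hall⟩
          · left; exact h0
          · right
            refine ⟨hlen', ?_⟩
            intro r hr
            rcases List.mem_append.mp hr with h1 | h1
            · exact hall r (hmem_a r h1)
            · rcases List.mem_cons.mp h1 with rfl | h1
              · have h3 := hall m hmmem
                show F k ≤ m.2 + p.2
                linarith
              · exact hall r (hmem_b r h1)
      · intro r hr
        rcases List.mem_append.mp hr with h1 | h1
        · have h2 : r.1 ≠ p.1 := hr_old r (Or.inl h1)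
          simp only [if_neg h2, add_zero]
          exact hpres r (hmem_a r h1)
        · rcases List.mem_cons.mp h1 with rfl | h1
          · show F p.1 + (if p.1 = p.1 then p.2 else 0) ≤ m.2 + p.2
            rw [if_pos rfl]
            linarith
          · have h2 : r.1 ≠ p.1 := hr_old r (Or.inr h1)
            simp only [if_neg h2, add_zero]
            exact hpres r (hmem_b r h1)


lemma ssinv_congr {c : ℕ} {F G : ℕ → ℝ} {S : ℝ} {st : List (ℕ × ℝ)}
    (h : ∀ k, F k = G k) (hi : SSInv c F S st) : SSInv c G S st := by
  have : F = G := funext h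
  exact this ▸ hi

lemma run_inv {c : ℕ} (hc : 2 ≤ c) :
    ∀ (stream : List (ℕ × ℝ)) (F : ℕ → ℝ) (S : ℝ) (st : List (ℕ × ℝ)),
      (∀ p ∈ stream, 0 < p.2) → SSInv c F S st →
      SSInv c (fun k => F k + ((stream.filter (fun p => p.1 = k)).map Prod.snd).sum)
        (S + (stream.map Prod.snd).sum) (stream.foldl (ssStep c) st) := by
  intro stream
  induction stream with
  | nil => intro F S st _ h; simpa using h
  | cons p rest ih =>
    intro F S st hpos h
    simp only [List.foldl_cons]
    have h1 := step_inv hc (hpos p (by simp)) h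
    have h2 := ih _ _ _ (fun q hq => hpos q (by simp [hq])) h1
    have hS : S + p.2 + (rest.map Prod.snd).sum = S + (((p :: rest).map Prod.snd).sum) := by
      simp; ring
    rw [hS] at h2
    refine ssinv_congr ?_ h2
    intro k
    by_cases hk : p.1 = k
    · subst hk
      simp [List.filter_cons]
      ring
    · have hk' : ¬ k = p.1 := fun h => hk h.symm
      simp [List.filter_cons, hk, hk']

/-- In SpaceSaving with capacity `c`, when the structure is full the
minimum recorded counter never exceeds `S / c` where `S` is the total inserted score;
consequently any feature whose true total score strictly exceeds
`S_other / (c - 1)` is present at the end. -/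
theorem stmt14 (c : ℕ) (hc : 2 ≤ c) (stream : List (ℕ × ℝ))
    (hpos : ∀ p ∈ stream, 0 < p.2) :
    ((ssRun c stream).length = c →
      ∃ q ∈ ssRun c stream, q.2 ≤ (stream.map Prod.snd).sum / c) ∧
    (∀ k : ℕ,
      ((stream.filter (fun p => p.1 ≠ k)).map Prod.snd).sum / ((c : ℝ) - 1)
          < ((stream.filter (fun p => p.1 = k)).map Prod.snd).sum →
      k ∈ (ssRun c stream).map Prod.fst) := by
  have h0 : SSInv c (fun _ => 0) 0 [] := by
    refine ⟨by simp, by simp, by simp, by simp, ?_, by simp⟩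
    intro k _
    exact Or.inl rfl
  have H := run_inv hc stream (fun _ => 0) 0 [] hpos h0
  rw [zero_add] at H
  rw [show stream.foldl (ssStep c) [] = ssRun c stream from rfl] at H
  have H2 : SSInv c (fun k => ((stream.filter (fun p => p.1 = k)).map Prod.snd).sum)
      ((stream.map Prod.snd).sum) (ssRun c stream) := by
    refine ssinv_congr (fun k => by simp) H
  obtain ⟨hnd, hlen, hposc, hsum, habs, hpres⟩ := H2
  have hcpos : (0:ℝ) < c := by positivity
  constructor
  · intro hlenc
    have hne : ssRun c stream ≠ [] := by
      intro h0'; rw [h0'] at hlenc; simp at hlenc; omega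
    obtain ⟨hm1, _, hmin⟩ := foldl_min_spec (ssRun c stream) (ssRun c stream).headI
    set m := (ssRun c stream).foldl (fun acc q => if q.2 < acc.2 then q else acc)
      (ssRun c stream).headI with hmdef
    have hmmem : m ∈ ssRun c stream := by
      rcases hm1 with h1 | h1
      · rw [h1]; exact headI_mem' hne
      · exact h1
    refine ⟨m, hmmem, ?_⟩
    have hb : ∀ x ∈ (ssRun c stream).map Prod.snd, m.2 ≤ x := by
      intro x hx
      obtain ⟨q, hq, rfl⟩ := List.mem_map.mp hx
      exact hmin q hq
    have := list_min_le ((ssRun c stream).map Prod.snd) m.2 hb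
    rw [List.length_map, hlenc, hsum] at this
    rw [le_div_iff₀ hcpos]
    linarith
  · intro k hk
    by_contra hkn
    set Fk := ((stream.filter (fun p => p.1 = k)).map Prod.snd).sum with hFkdef
    set So := ((stream.filter (fun p => p.1 ≠ k)).map Prod.snd).sum with hSodef
    have hSo_nonneg : 0 ≤ So := by
      apply List.sum_nonneg
      intro x hx
      obtain ⟨q, hq, rfl⟩ := List.mem_map.mp hx
      exact le_of_lt (hpos q (List.mem_of_mem_filter hq))
    have hc1 : (0:ℝ) < (c:ℝ) - 1 := by
      have : (2:ℝ) ≤ c := by exact_mod_cast hc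
      linarith
    have htot : Fk + So = (stream.map Prod.snd).sum := filter_sum k stream
    rcases habs k hkn with hF0 | ⟨hl, hall⟩
    · have hF0' : Fk = 0 := hF0
      rw [hF0'] at hk
      exact absurd hk (not_lt.mpr (div_nonneg hSo_nonneg (le_of_lt hc1)))
    · have hb : ∀ x ∈ (ssRun c stream).map Prod.snd, Fk ≤ x := by
        intro x hx
        obtain ⟨q, hq, rfl⟩ := List.mem_map.mp hx
        exact hall q hq
      have hmin := list_min_le ((ssRun c stream).map Prod.snd) Fk hb
      rw [List.length_map, hl, hsum] at hmin
      have hk' : So < Fk * ((c:ℝ) - 1) := (div_lt_iff₀ hc1).mp hk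
      have h2c : (2:ℝ) ≤ c := by exact_mod_cast hc
      nlinarith
end
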